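/- Let σz = [[1,0],[0,−1]], σx = [[0,1],[1,0]], σy = [[0,−i],[i,0]], let e₀, e₁ be the standard basis of ℂ², and let Ψ₀ = γ₁ • (e₀ ⊗ e₁) + γ₂ • (e₁ ⊗ e₀) with |γ₁|² + |γ₂|² = 1, γ₁ ≠ 0, γ₂ ≠ 0, and set α₁ = |γ₁|² − |γ₂|². Then Δ_{Ψ₀}(σz ⊗ I) · Δ_{Ψ₀}(σx ⊗ I) = √(1 − α₁²) > 0 = (1/2)·|⟨Ψ₀, (σy ⊗ I) *ᵥ Ψ₀⟩|; in particular the uncertainty relation holds strictly in the state Ψ₀. -/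

import Mathlib

open Kronecker

/-- The product state `u ⊗ v` in the composite system, `(u ⊗ v)(i,j) = u i · v j`. -/
noncomputable def prodVec (u v : EuclideanSpace ℂ (Fin 2)) :
    EuclideanSpace ℂ (Fin 2 × Fin 2) :=
  WithLp.toLp 2 (fun p : Fin 2 × Fin 2 => u p.1 * v p.2)

/-- Expectation of an observable `M` in the state `ψ` of the composite system. -/
noncomputable def expVal₂ (ψ : EuclideanSpace ℂ (Fin 2 × Fin 2))
    (M : Matrix (Fin 2 × Fin 2) (Fin 2 × Fin 2) ℂ) : ℝ :=
  (inner ℂ ψ (Matrix.toEuclideanLin M ψ) : ℂ).re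

/-- Variance: `Var_ψ(M) = E_ψ(M·M) − E_ψ(M)²`. -/
noncomputable def varVal₂ (ψ : EuclideanSpace ℂ (Fin 2 × Fin 2))
    (M : Matrix (Fin 2 × Fin 2) (Fin 2 × Fin 2) ℂ) : ℝ :=
  expVal₂ ψ (M * M) - (expVal₂ ψ M) ^ 2

/-- Standard deviation: `Δ_ψ(M) = √(Var_ψ(M))`. -/
noncomputable def stdDev₂ (ψ : EuclideanSpace ℂ (Fin 2 × Fin 2))
    (M : Matrix (Fin 2 × Fin 2) (Fin 2 × Fin 2) ℂ) : ℝ :=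
  Real.sqrt (varVal₂ ψ M)

lemma key_inner (γ₁ γ₂ : ℂ) (M : Matrix (Fin 2 × Fin 2) (Fin 2 × Fin 2) ℂ) :
    (inner ℂ (γ₁ • prodVec (EuclideanSpace.single 0 1) (EuclideanSpace.single 1 1)
          + γ₂ • prodVec (EuclideanSpace.single 1 1) (EuclideanSpace.single 0 1))
      (Matrix.toEuclideanLin M
        (γ₁ • prodVec (EuclideanSpace.single 0 1) (EuclideanSpace.single 1 1)
          + γ₂ • prodVec (EuclideanSpace.single 1 1) (EuclideanSpace.single 0 1))) : ℂ)
    = (starRingEnd ℂ) γ₁ * (M (0,1) (0,1) * γ₁ + M (0,1) (1,0) * γ₂)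
      + (starRingEnd ℂ) γ₂ * (M (1,0) (0,1) * γ₁ + M (1,0) (1,0) * γ₂) := by
  have h : Matrix.toEuclideanLin M
        (γ₁ • prodVec (EuclideanSpace.single 0 1) (EuclideanSpace.single 1 1)
          + γ₂ • prodVec (EuclideanSpace.single 1 1) (EuclideanSpace.single 0 1))
      = WithLp.toLp 2 (fun p => ∑ q, M p q * ((γ₁ • prodVec (EuclideanSpace.single 0 1) (EuclideanSpace.single 1 1)
          + γ₂ • prodVec (EuclideanSpace.single 1 1) (EuclideanSpace.single 0 1)) q)) := rfl
  simp only [PiLp.inner_apply, h, RCLike.inner_apply, Fintype.sum_prod_type, Fin.sum_univ_two,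
    PiLp.add_apply, PiLp.smul_apply, prodVec, PiLp.toLp_apply, EuclideanSpace.single_apply, smul_eq_mul]
  norm_num
  simp [Matrix.mulVec, dotProduct, Fintype.sum_prod_type, Fin.sum_univ_two] <;> ring

/-- With the Pauli matrices `σz, σx, σy`, the state
`Ψ₀ = γ₁ • (e₀ ⊗ e₁) + γ₂ • (e₁ ⊗ e₀)` with `|γ₁|² + |γ₂|² = 1`, `γ₁ ≠ 0`, `γ₂ ≠ 0`, and
`α₁ = |γ₁|² − |γ₂|²`, we have
`Δ_{Ψ₀}(σz ⊗ I) · Δ_{Ψ₀}(σx ⊗ I) = √(1 − α₁²) > 0 = (1/2)·|⟨Ψ₀, (σy ⊗ I) *ᵥ Ψ₀⟩|`: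
the uncertainty relation holds strictly in `Ψ₀`. -/
theorem uncertainty_strict_in_Psi0 {γ₁ γ₂ : ℂ}
    (hnorm : ‖γ₁‖ ^ 2 + ‖γ₂‖ ^ 2 = 1)
    (h₁ : γ₁ ≠ 0) (h₂ : γ₂ ≠ 0) :
    stdDev₂
        (γ₁ • prodVec (EuclideanSpace.single 0 1) (EuclideanSpace.single 1 1)
          + γ₂ • prodVec (EuclideanSpace.single 1 1) (EuclideanSpace.single 0 1))
        ((!![1, 0; 0, -1] : Matrix (Fin 2) (Fin 2) ℂ) ⊗ₖ (1 : Matrix (Fin 2) (Fin 2) ℂ))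
      * stdDev₂
        (γ₁ • prodVec (EuclideanSpace.single 0 1) (EuclideanSpace.single 1 1)
          + γ₂ • prodVec (EuclideanSpace.single 1 1) (EuclideanSpace.single 0 1))
        ((!![0, 1; 1, 0] : Matrix (Fin 2) (Fin 2) ℂ) ⊗ₖ (1 : Matrix (Fin 2) (Fin 2) ℂ))
      = Real.sqrt (1 - (‖γ₁‖ ^ 2 - ‖γ₂‖ ^ 2) ^ 2)
    ∧ Real.sqrt (1 - (‖γ₁‖ ^ 2 - ‖γ₂‖ ^ 2) ^ 2) > 0
    ∧ (0 : ℝ) = (1 / 2) * ‖(inner ℂ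
          (γ₁ • prodVec (EuclideanSpace.single 0 1) (EuclideanSpace.single 1 1)
            + γ₂ • prodVec (EuclideanSpace.single 1 1) (EuclideanSpace.single 0 1))
          (Matrix.toEuclideanLin
            ((!![0, -Complex.I; Complex.I, 0] : Matrix (Fin 2) (Fin 2) ℂ)
              ⊗ₖ (1 : Matrix (Fin 2) (Fin 2) ℂ))
            (γ₁ • prodVec (EuclideanSpace.single 0 1) (EuclideanSpace.single 1 1)
              + γ₂ • prodVec (EuclideanSpace.single 1 1) (EuclideanSpace.single 0 1))))‖ := by
  set a := ‖γ₁‖ ^ 2 with ha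
  set b := ‖γ₂‖ ^ 2 with hb
  have ha0 : 0 < a := pow_pos (norm_pos_iff.mpr h₁) 2
  have hb0 : 0 < b := pow_pos (norm_pos_iff.mpr h₂) 2
  have hz : expVal₂ (γ₁ • prodVec (EuclideanSpace.single 0 1) (EuclideanSpace.single 1 1)
          + γ₂ • prodVec (EuclideanSpace.single 1 1) (EuclideanSpace.single 0 1))
      ((!![1, 0; 0, -1] : Matrix (Fin 2) (Fin 2) ℂ) ⊗ₖ 1) = a - b := by
    rw [expVal₂, key_inner]
    simp [Matrix.kroneckerMap_apply, Matrix.one_apply, Complex.conj_mul',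
      ← Complex.ofReal_pow, ha, hb, sub_eq_add_neg]
  have hz2 : expVal₂ (γ₁ • prodVec (EuclideanSpace.single 0 1) (EuclideanSpace.single 1 1)
          + γ₂ • prodVec (EuclideanSpace.single 1 1) (EuclideanSpace.single 0 1))
      (((!![1, 0; 0, -1] : Matrix (Fin 2) (Fin 2) ℂ) ⊗ₖ 1)
        * ((!![1, 0; 0, -1] : Matrix (Fin 2) (Fin 2) ℂ) ⊗ₖ 1)) = 1 := by
    rw [expVal₂, key_inner]
    simp [Matrix.mul_apply, Fintype.sum_prod_type, Fin.sum_univ_two,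
      Matrix.kroneckerMap_apply, Matrix.one_apply, Complex.conj_mul', ← Complex.ofReal_pow]
    rw [← ha, ← hb]; linarith
  have hx : expVal₂ (γ₁ • prodVec (EuclideanSpace.single 0 1) (EuclideanSpace.single 1 1)
          + γ₂ • prodVec (EuclideanSpace.single 1 1) (EuclideanSpace.single 0 1))
      ((!![0, 1; 1, 0] : Matrix (Fin 2) (Fin 2) ℂ) ⊗ₖ 1) = 0 := by
    rw [expVal₂, key_inner]
    simp [Matrix.kroneckerMap_apply, Matrix.one_apply]
  have hx2 : expVal₂ (γ₁ • prodVec (EuclideanSpace.single 0 1) (EuclideanSpace.single 1 1)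
          + γ₂ • prodVec (EuclideanSpace.single 1 1) (EuclideanSpace.single 0 1))
      (((!![0, 1; 1, 0] : Matrix (Fin 2) (Fin 2) ℂ) ⊗ₖ 1)
        * ((!![0, 1; 1, 0] : Matrix (Fin 2) (Fin 2) ℂ) ⊗ₖ 1)) = 1 := by
    rw [expVal₂, key_inner]
    simp [Matrix.mul_apply, Fintype.sum_prod_type, Fin.sum_univ_two,
      Matrix.kroneckerMap_apply, Matrix.one_apply, Complex.conj_mul', ← Complex.ofReal_pow]
    rw [← ha, ← hb]; linarith
  have hy : (inner ℂ (γ₁ • prodVec (EuclideanSpace.single 0 1) (EuclideanSpace.single 1 1)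
            + γ₂ • prodVec (EuclideanSpace.single 1 1) (EuclideanSpace.single 0 1))
          (Matrix.toEuclideanLin
            ((!![0, -Complex.I; Complex.I, 0] : Matrix (Fin 2) (Fin 2) ℂ)
              ⊗ₖ (1 : Matrix (Fin 2) (Fin 2) ℂ))
            (γ₁ • prodVec (EuclideanSpace.single 0 1) (EuclideanSpace.single 1 1)
              + γ₂ • prodVec (EuclideanSpace.single 1 1) (EuclideanSpace.single 0 1))) : ℂ) = 0 := by
    rw [key_inner]
    simp [Matrix.kroneckerMap_apply, Matrix.one_apply]
  have hpos : (0:ℝ) < 1 - (a - b) ^ 2 := by nlinarith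
  refine ⟨?_, ?_, ?_⟩
  · rw [stdDev₂, stdDev₂, varVal₂, varVal₂, hz, hz2, hx, hx2]
    norm_num
  · exact Real.sqrt_pos.mpr hpos
  · rw [hy]
    simp
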